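/- arXiv:1210.6768 — 3 statements merged into one kernel-verified Lean document; each statement's English description precedes it below -/
import Mathlib

section
/- Let A be a Hopf algebra with adjoint action ad. A linear functional φ on A satisfies (id ⊗ φ) ∘ ad = φ(·)·1 (ad-invariance) if and only if φ lies in the center of the convolution algebra A', i.e. φ ⋆ ψ = ψ ⋆ φ for all linear functionals ψ on A. -/
/-!
Write `η φ` for `a ↦ φ a • 1` and work in the convolution algebra of linear maps `A → A`, where
the antipode `S` is the two-sided inverse of `id`. The map `a ↦ (id ⊗ φ)(ad a)` is the convolution
`id ⋆ η φ ⋆ S`, so ad-invariance says `id ⋆ η φ ⋆ S = η φ`, i.e. `id ⋆ η φ = η φ ⋆ id`.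
Composing with a functional `ψ` turns `η φ ⋆ id` and `id ⋆ η φ` into `φ ⋆ ψ` and `ψ ⋆ φ`, and
functionals separate the points of `A`, so this is exactly centrality of `φ` in `A'`.
-/

open TensorProduct Coalgebra LinearMap

variable {A : Type} [Ring A] [HopfAlgebra ℂ A]

/-- The adjoint action `ad(a) = a₍₁₎ S(a₍₃₎) ⊗ a₍₂₎` of a Hopf algebra. -/
noncomputable def adAction : A →ₗ[ℂ] A ⊗[ℂ] A :=
  (LinearMap.rTensor A (LinearMap.mul' ℂ A)) ∘ₗ
  (TensorProduct.assoc ℂ A A A).symm.toLinearMap ∘ₗ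
  (LinearMap.lTensor A
    ((LinearMap.rTensor A (HopfAlgebra.antipode (R := ℂ) (A := A))) ∘ₗ
      (TensorProduct.comm ℂ A A).toLinearMap)) ∘ₗ
  (TensorProduct.assoc ℂ A A A).toLinearMap ∘ₗ
  (LinearMap.rTensor A (Coalgebra.comul (R := ℂ))) ∘ₗ Coalgebra.comul (R := ℂ)

/-- Convolution of functionals: `(φ ⋆ ψ)(a) = (φ ⊗ ψ)(Δ a)`. -/
noncomputable def conv (φ ψ : A →ₗ[ℂ] ℂ) : A →ₗ[ℂ] ℂ :=
  (LinearMap.mul' ℂ ℂ) ∘ₗ (TensorProduct.map φ ψ) ∘ₗ Coalgebra.comul (R := ℂ)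

/-- A functional `φ` is ad-invariant if `(id ⊗ φ)(ad a) = φ(a) • 1`. -/
def IsAdInvariant (φ : A →ₗ[ℂ] ℂ) : Prop :=
  ∀ a : A, (TensorProduct.rid ℂ A) ((LinearMap.lTensor A φ) (adAction a)) = φ a • (1 : A)

open WithConv

section
variable {R C B : Type*} [CommSemiring R] [Semiring B] [Algebra R B]
  [AddCommMonoid C] [Module R C] [Coalgebra R C]

lemma comp_algebraMap_comp_convMul (φ : C →ₗ[R] R) (f : C →ₗ[R] B) (ψ : B →ₗ[R] R) :
    ψ ∘ₗ (toConv (Algebra.linearMap R B ∘ₗ φ) * toConv f).ofConv =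
      (toConv φ * toConv (ψ ∘ₗ f)).ofConv := by
  ext c
  simp [(ℛ R c).convMul_apply, ← Algebra.smul_def]

lemma comp_convMul_algebraMap_comp (φ : C →ₗ[R] R) (f : C →ₗ[R] B) (ψ : B →ₗ[R] R) :
    ψ ∘ₗ (toConv f * toConv (Algebra.linearMap R B ∘ₗ φ)).ofConv =
      (toConv (ψ ∘ₗ f) * toConv φ).ofConv := by
  ext c
  simp [(ℛ R c).convMul_apply, ← Algebra.commutes, ← Algebra.smul_def, mul_comm]

end

lemma forall_dual_comp_eq_iff {R M N : Type*} [CommRing R] [AddCommGroup M] [Module R M]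
    [AddCommGroup N] [Module R N] [Module.Projective R N] {f g : M →ₗ[R] N} :
    (∀ ψ : Module.Dual R N, ψ ∘ₗ f = ψ ∘ₗ g) ↔ f = g := by
  refine ⟨fun h ↦ LinearMap.ext fun m ↦ ?_, fun h _ ↦ h ▸ rfl⟩
  rw [← sub_eq_zero, ← Module.forall_dual_apply_eq_zero_iff R]
  intro ψ
  rw [map_sub, sub_eq_zero]
  exact LinearMap.congr_fun (h ψ) m

theorem forall_commute_toConv_iff {R H : Type*} [CommRing R] [Ring H] [Bialgebra R H]
    [Module.Projective R H] (φ : H →ₗ[R] R) :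
    (∀ ψ : H →ₗ[R] R, Commute (toConv φ) (toConv ψ)) ↔
      Commute (toConv LinearMap.id) (toConv (Algebra.linearMap R H ∘ₗ φ)) := by
  have commute_iff_comp (ψ : H →ₗ[R] R) : Commute (toConv φ) (toConv ψ) ↔
      ψ ∘ₗ (toConv LinearMap.id * toConv (Algebra.linearMap R H ∘ₗ φ)).ofConv =
        ψ ∘ₗ (toConv (Algebra.linearMap R H ∘ₗ φ) * toConv LinearMap.id).ofConv := by
    rw [comp_algebraMap_comp_convMul, comp_convMul_algebraMap_comp, LinearMap.comp_id,
      ofConv_injective.eq_iff]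
    exact eq_comm
  simp_rw [commute_iff_comp]
  exact forall_dual_comp_eq_iff.trans ofConv_injective.eq_iff

lemma mul_antipode_eq_iff {R H : Type*} [CommSemiring R] [Semiring H] [HopfAlgebra R H]
    (x y : WithConv (H →ₗ[R] H)) :
    x * toConv (HopfAlgebra.antipode R) = y ↔ x = y * toConv LinearMap.id :=
  let unitId : (WithConv (H →ₗ[R] H))ˣ := ⟨toConv LinearMap.id, _, id_mul_antipode, antipode_mul_id⟩
  unitId.mul_inv_eq_iff_eq_mul

lemma rid_lTensor_adAction (φ : A →ₗ[ℂ] ℂ) (a : A) :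
    TensorProduct.rid ℂ A (lTensor A φ (adAction a)) =
      (toConv LinearMap.id * toConv (Algebra.linearMap ℂ A ∘ₗ φ) *
        toConv (HopfAlgebra.antipode ℂ) : WithConv (A →ₗ[ℂ] A)) a := by
  let r := ℛ ℂ a
  rw [r.convMul_apply]
  simp only [adAction, LinearMap.comp_apply, ← r.eq, map_sum, LinearMap.rTensor_tmul]
  refine Finset.sum_congr rfl fun i _ ↦ ?_
  rw [(ℛ ℂ (r.left i)).convMul_apply, ← (ℛ ℂ (r.left i)).eq]
  simp [TensorProduct.sum_tmul, Finset.sum_mul, Algebra.smul_def, Algebra.commutes, mul_assoc]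

lemma isAdInvariant_iff (φ : A →ₗ[ℂ] ℂ) :
    IsAdInvariant φ ↔ toConv LinearMap.id * toConv (Algebra.linearMap ℂ A ∘ₗ φ) *
      toConv (HopfAlgebra.antipode ℂ) = toConv (Algebra.linearMap ℂ A ∘ₗ φ) := by
  simp only [IsAdInvariant, rid_lTensor_adAction, WithConv.ext_iff, LinearMap.ext_iff]
  simp only [LinearMap.comp_apply, Algebra.linearMap_apply, Algebra.algebraMap_eq_smul_one]

theorem adInvariant_iff_central (φ : A →ₗ[ℂ] ℂ) :
    IsAdInvariant φ ↔ ∀ ψ : A →ₗ[ℂ] ℂ, conv φ ψ = conv ψ φ := by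
  rw [isAdInvariant_iff, mul_antipode_eq_iff]
  exact (forall_commute_toConv_iff φ).symm.trans
    (forall_congr' fun ψ ↦ ofConv_injective.eq_iff.symm)
end

section
/- On a compact quantum group, a linear functional φ on the *-Hopf algebra A is ad-invariant if and only if for every irreducible unitary corepresentation u^{(s)} there is a scalar c_s with φ(u^{(s)}_{jk}) = c_s δ_{jk} for all matrix indices j, k. -/
open TensorProduct Coalgebra LinearMap

variable {A : Type} [Ring A] [StarRing A] [HopfAlgebra ℂ A]

section Aux

variable {I : Type} {n : I → ℕ} {u : ∀ s : I, Fin (n s) → Fin (n s) → A}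

lemma adAction_apply_u
    (hcomul : ∀ s j k, Coalgebra.comul (R := ℂ) (u s j k) = ∑ p, u s j p ⊗ₜ[ℂ] u s p k)
    (hantipode : ∀ s j k, HopfAlgebra.antipode (R := ℂ) (u s j k) = star (u s k j))
    (s : I) (j k : Fin (n s)) :
    adAction (u s j k) = ∑ q, ∑ p, (u s j q * star (u s k p)) ⊗ₜ[ℂ] u s q p := by
  simp only [adAction, LinearMap.comp_apply, hcomul, map_sum, LinearMap.rTensor_tmul,
    LinearEquiv.coe_coe, hcomul, LinearMap.lTensor_tmul, TensorProduct.assoc_tmul,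
    TensorProduct.comm_tmul, TensorProduct.assoc_symm_tmul, hantipode, LinearMap.mul'_apply,
    TensorProduct.sum_tmul, TensorProduct.tmul_sum]
  rw [Finset.sum_comm]

lemma rid_lTensor_adAction_u
    (hcomul : ∀ s j k, Coalgebra.comul (R := ℂ) (u s j k) = ∑ p, u s j p ⊗ₜ[ℂ] u s p k)
    (hantipode : ∀ s j k, HopfAlgebra.antipode (R := ℂ) (u s j k) = star (u s k j))
    (φ : A →ₗ[ℂ] ℂ) (s : I) (j k : Fin (n s)) :
    (TensorProduct.rid ℂ A) ((LinearMap.lTensor A φ) (adAction (u s j k)))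
      = ∑ q, ∑ p, φ (u s q p) • (u s j q * star (u s k p)) := by
  rw [adAction_apply_u hcomul hantipode]
  simp [map_sum, LinearMap.lTensor_tmul, TensorProduct.rid_tmul]

lemma counit_u
    (h f1 fm1 : A →ₗ[ℂ] ℂ) (D : I → ℂ) (hDne : ∀ s, D s ≠ 0)
    (hcomul : ∀ s j k, Coalgebra.comul (R := ℂ) (u s j k) = ∑ p, u s j p ⊗ₜ[ℂ] u s p k)
    (hPW1 : ∀ s (i j k l : Fin (n s)),
      h (star (u s i j) * u s k l) = if j = l then fm1 (u s k i) / D s else 0)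
    (hinv : ∀ s, (Matrix.of fun j k => f1 (u s j k)) * (Matrix.of fun j k => fm1 (u s j k)) = 1)
    (s : I) (j k : Fin (n s)) :
    Coalgebra.counit (R := ℂ) (u s j k) = if j = k then 1 else 0 := by
  have hMF : (Matrix.of fun j k => fm1 (u s j k)) * (Matrix.of fun j k => f1 (u s j k)) = 1 :=
    mul_eq_one_comm.mp (hinv s)
  have base : ∀ j k : Fin (n s),
      ∑ p, Coalgebra.counit (R := ℂ) (u s j p) • u s p k = u s j k := by
    intro j k
    have h1 := Coalgebra.rTensor_counit_comul (R := ℂ) (u s j k)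
    rw [hcomul] at h1
    have h2 := congrArg (TensorProduct.lid ℂ A) h1
    simpa [map_sum, TensorProduct.lid_tmul] using h2
  have h3 : ∀ (a j : Fin (n s)),
      ∑ p, Coalgebra.counit (R := ℂ) (u s j p) * fm1 (u s p a) = fm1 (u s j a) := by
    intro a j
    have h4 := congrArg (fun x => h (star (u s a k) * x)) (base j k)
    simp only [Finset.mul_sum, mul_smul_comm, map_sum, map_smul, smul_eq_mul, hPW1,
      if_pos rfl] at h4
    have h5 : (∑ p, Coalgebra.counit (R := ℂ) (u s j p) * fm1 (u s p a)) / D s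
        = fm1 (u s j a) / D s := by
      rw [Finset.sum_div]
      simpa [mul_div_assoc] using h4
    exact (div_left_inj' (hDne s)).mp h5
  have hEM : (Matrix.of fun j k => Coalgebra.counit (R := ℂ) (u s j k)) *
      (Matrix.of fun j k => fm1 (u s j k)) = Matrix.of fun j k => fm1 (u s j k) := by
    ext j a
    simpa [Matrix.mul_apply] using h3 a j
  have hE : (Matrix.of fun j k => Coalgebra.counit (R := ℂ) (u s j k)) = 1 := by
    calc (Matrix.of fun j k => Coalgebra.counit (R := ℂ) (u s j k))
        = (Matrix.of fun j k => Coalgebra.counit (R := ℂ) (u s j k)) *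
          ((Matrix.of fun j k => fm1 (u s j k)) * (Matrix.of fun j k => f1 (u s j k))) := by
          rw [hMF, Matrix.mul_one]
      _ = ((Matrix.of fun j k => Coalgebra.counit (R := ℂ) (u s j k)) *
          (Matrix.of fun j k => fm1 (u s j k))) * (Matrix.of fun j k => f1 (u s j k)) := by
          rw [Matrix.mul_assoc]
      _ = 1 := by rw [hEM, hMF]
  have := congrFun (congrFun hE j) k
  simpa [Matrix.one_apply] using this

lemma unit_left
    (hcomul : ∀ s j k, Coalgebra.comul (R := ℂ) (u s j k) = ∑ p, u s j p ⊗ₜ[ℂ] u s p k)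
    (hantipode : ∀ s j k, HopfAlgebra.antipode (R := ℂ) (u s j k) = star (u s k j))
    (hcounit : ∀ s (j k : Fin (n s)),
      Coalgebra.counit (R := ℂ) (u s j k) = if j = k then 1 else 0)
    (s : I) (j k : Fin (n s)) :
    ∑ p, star (u s p j) * u s p k = if j = k then (1 : A) else 0 := by
  have h1 := HopfAlgebra.mul_antipode_rTensor_comul_apply (R := ℂ) (u s j k)
  rw [hcomul] at h1
  simp only [map_sum, LinearMap.rTensor_tmul, LinearMap.mul'_apply, hantipode, hcounit] at h1
  rw [h1]
  split <;> simp

lemma unit_right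
    (hcomul : ∀ s j k, Coalgebra.comul (R := ℂ) (u s j k) = ∑ p, u s j p ⊗ₜ[ℂ] u s p k)
    (hantipode : ∀ s j k, HopfAlgebra.antipode (R := ℂ) (u s j k) = star (u s k j))
    (hcounit : ∀ s (j k : Fin (n s)),
      Coalgebra.counit (R := ℂ) (u s j k) = if j = k then 1 else 0)
    (s : I) (j k : Fin (n s)) :
    ∑ q, u s j q * star (u s k q) = if j = k then (1 : A) else 0 := by
  have h1 := HopfAlgebra.mul_antipode_lTensor_comul_apply (R := ℂ) (u s j k)
  rw [hcomul] at h1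
  simp only [map_sum, LinearMap.lTensor_tmul, LinearMap.mul'_apply, hantipode, hcounit] at h1
  rw [h1]
  split <;> simp

lemma row_nonzero (f1 fm1 : A →ₗ[ℂ] ℂ)
    (hinv : ∀ s, (Matrix.of fun j k => f1 (u s j k)) * (Matrix.of fun j k => fm1 (u s j k)) = 1)
    (s : I) (j : Fin (n s)) : ∃ a, fm1 (u s j a) ≠ 0 := by
  by_contra hall
  push_neg at hall
  have hMF : (Matrix.of fun j k => fm1 (u s j k)) * (Matrix.of fun j k => f1 (u s j k)) = 1 :=
    mul_eq_one_comm.mp (hinv s)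
  have := congrFun (congrFun hMF j) j
  simp [Matrix.mul_apply, hall, Matrix.one_apply] at this

end Aux

theorem adInvariant_iff_characteristic_matrices_scalar
    {I : Type} (n : I → ℕ) (u : ∀ s : I, Fin (n s) → Fin (n s) → A)
    (h f1 fm1 : A →ₗ[ℂ] ℂ) (D : I → ℂ)
    (hD : ∀ s, D s = ∑ l, f1 (u s l l))
    (hDne : ∀ s, D s ≠ 0)
    (hcomul : ∀ s j k, Coalgebra.comul (R := ℂ) (u s j k) = ∑ p, u s j p ⊗ₜ[ℂ] u s p k)
    (hspan : Submodule.span ℂ {a : A | ∃ s j k, a = u s j k} = ⊤)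
    (hantipode : ∀ s j k, HopfAlgebra.antipode (R := ℂ) (u s j k) = star (u s k j))
    (hPW1 : ∀ s (i j k l : Fin (n s)),
      h (star (u s i j) * u s k l) = if j = l then fm1 (u s k i) / D s else 0)
    (hPW1' : ∀ s t, s ≠ t → ∀ (i j : Fin (n s)) (k l : Fin (n t)),
      h (star (u s i j) * u t k l) = 0)
    (hPW2 : ∀ s (i j k l : Fin (n s)),
      h (u s i j * star (u s k l)) = if i = k then f1 (u s l j) / D s else 0)
    (hPW2' : ∀ s t, s ≠ t → ∀ (i j : Fin (n s)) (k l : Fin (n t)),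
      h (u s i j * star (u t k l)) = 0)
    (hinv : ∀ s, (Matrix.of fun j k => f1 (u s j k)) * (Matrix.of fun j k => fm1 (u s j k)) = 1)
    (φ : A →ₗ[ℂ] ℂ) :
    IsAdInvariant φ ↔
      ∀ s : I, ∃ c : ℂ, ∀ j k : Fin (n s), φ (u s j k) = if j = k then c else 0 := by
  have hcounit : ∀ s (j k : Fin (n s)),
      Coalgebra.counit (R := ℂ) (u s j k) = if j = k then 1 else 0 :=
    fun s j k => counit_u h f1 fm1 D hDne hcomul hPW1 hinv s j k
  constructor
  · intro hφ s
    have key : ∀ j k : Fin (n s),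
        ∑ q, ∑ p, φ (u s q p) • (u s j q * star (u s k p)) = φ (u s j k) • (1 : A) := by
      intro j k
      have := hφ (u s j k)
      rwa [rid_lTensor_adAction_u hcomul hantipode] at this
    have stepA : ∀ j m : Fin (n s),
        ∑ q, φ (u s q m) • u s j q = ∑ k, φ (u s j k) • u s k m := by
      intro j m
      calc ∑ q, φ (u s q m) • u s j q
          = ∑ q, ∑ p, φ (u s q p) • (u s j q * (if p = m then (1 : A) else 0)) := by
            refine Finset.sum_congr rfl fun q _ => ?_
            rw [Finset.sum_eq_single m (fun p _ hp => by simp [hp]) (by simp)]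
            simp
        _ = ∑ q, ∑ p, φ (u s q p) • (u s j q * ∑ k, star (u s k p) * u s k m) := by
            refine Finset.sum_congr rfl fun q _ => Finset.sum_congr rfl fun p _ => ?_
            rw [unit_left hcomul hantipode hcounit s p m]
        _ = ∑ k, (∑ q, ∑ p, φ (u s q p) • (u s j q * star (u s k p))) * u s k m := by
            simp only [Finset.mul_sum, Finset.smul_sum, Finset.sum_mul, smul_mul_assoc,
              mul_assoc]
            exact (Finset.sum_congr rfl fun q _ => Finset.sum_comm).trans Finset.sum_comm
        _ = ∑ k, (φ (u s j k) • (1 : A)) * u s k m := by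
            exact Finset.sum_congr rfl fun k _ => by rw [key j k]
        _ = ∑ k, φ (u s j k) • u s k m := by simp [smul_mul_assoc]
    have starEq : ∀ (a b j m : Fin (n s)),
        φ (u s b m) * fm1 (u s j a)
          = if b = m then ∑ k, φ (u s j k) * fm1 (u s k a) else 0 := by
      intro a b j m
      have h1 := congrArg (fun x => h (star (u s a b) * x)) (stepA j m)
      simp only [Finset.mul_sum, mul_smul_comm, map_sum, map_smul, smul_eq_mul, hPW1] at h1
      rw [Finset.sum_eq_single b (fun q _ hq => by simp [Ne.symm hq]) (by simp),
        if_pos rfl] at h1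
      by_cases hbm : b = m
      · simp only [if_pos hbm] at h1 ⊢
        refine (div_left_inj' (hDne s)).mp ?_
        rw [Finset.sum_div]
        simpa [mul_div_assoc] using h1
      · simp only [if_neg hbm, mul_zero, Finset.sum_const_zero] at h1 ⊢
        rcases mul_eq_zero.mp h1 with h2 | h2
        · rw [h2, zero_mul]
        · rw [(div_eq_zero_iff.mp h2).resolve_right (hDne s), mul_zero]
    have offdiag : ∀ b m : Fin (n s), b ≠ m → φ (u s b m) = 0 := by
      intro b m hbm
      obtain ⟨a, ha⟩ := row_nonzero f1 fm1 hinv s b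
      have h1 := starEq a b b m
      rw [if_neg hbm] at h1
      exact (mul_eq_zero.mp h1).resolve_right ha
    have diag : ∀ j m : Fin (n s), φ (u s m m) = φ (u s j j) := by
      intro j m
      obtain ⟨a, ha⟩ := row_nonzero f1 fm1 hinv s j
      have h1 := starEq a m j m
      rw [if_pos rfl] at h1
      have h2 : ∑ k, φ (u s j k) * fm1 (u s k a) = φ (u s j j) * fm1 (u s j a) := by
        rw [Finset.sum_eq_single j
          (fun k _ hk => by rw [offdiag j k (Ne.symm hk), zero_mul]) (by simp)]
      rw [h2] at h1
      exact mul_right_cancel₀ ha h1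
    rcases Nat.eq_zero_or_pos (n s) with h0 | h0
    · exact ⟨0, fun j k => ((h0 ▸ j : Fin 0)).elim0⟩
    · refine ⟨φ (u s ⟨0, h0⟩ ⟨0, h0⟩), fun j k => ?_⟩
      by_cases hjk : j = k
      · subst hjk
        rw [if_pos rfl]
        exact diag ⟨0, h0⟩ j
      · rw [if_neg hjk]
        exact offdiag j k hjk
  · intro hc
    have hL : ((TensorProduct.rid ℂ A).toLinearMap ∘ₗ (LinearMap.lTensor A φ) ∘ₗ adAction)
        = φ.smulRight (1 : A) := by
      apply LinearMap.ext_on hspan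
      rintro x ⟨s, j, k, rfl⟩
      obtain ⟨c, hcs⟩ := hc s
      simp only [LinearMap.comp_apply, LinearEquiv.coe_coe, LinearMap.smulRight_apply,
        LinearMap.id_apply]
      rw [rid_lTensor_adAction_u hcomul hantipode]
      simp only [hcs]
      calc ∑ q, ∑ p, (if q = p then c else 0) • (u s j q * star (u s k p))
          = ∑ q, c • (u s j q * star (u s k q)) := by
            refine Finset.sum_congr rfl fun q _ => ?_
            rw [Finset.sum_eq_single q (fun p _ hp => by simp [Ne.symm hp]) (by simp)]
            rw [if_pos rfl]
        _ = c • ∑ q, u s j q * star (u s k q) := by rw [Finset.smul_sum]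
        _ = c • (if j = k then (1 : A) else 0) := by
            rw [unit_right hcomul hantipode hcounit s j k]
        _ = (if j = k then c else 0) • (1 : A) := by split <;> simp
    intro a
    have := LinearMap.congr_fun hL a
    simpa using this
end

section
/- For N = 2 and the eigenvalues λ_s = −U'_s(2)/U_s(2) of the ad-invariant Markov generator on O₂⁺ with characteristic pair (b,ν) = (1,0), one has U_s(2) = s+1, U'_s(2) = s(s+1)(s+2)/6, hence λ_s = −s(s+2)/6; and the abscissa of convergence of the series Σ_{s≥1} (s+1)² (s(s+2)/6)^{-d/2} in d equals 3. -/
open Real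

lemma shifted_summable (p : ℝ) :
    Summable (fun s : ℕ => ((s : ℝ) + 2) ^ p) ↔ p < -1 := by
  rw [← Real.summable_nat_rpow (p := p),
    ← summable_nat_add_iff (f := fun n : ℕ => (n : ℝ) ^ p) 2]
  have : (fun s : ℕ => ((s : ℝ) + 2) ^ p) = (fun n : ℕ => ((n + 2 : ℕ) : ℝ) ^ p) := by
    funext s; push_cast; ring_nf
  rw [this]

lemma term_eq (d : ℝ) (s : ℕ) :
    ((s : ℝ) + 2) ^ 2 * ((((s : ℝ) + 1) * (((s : ℝ) + 1) + 2) / 6) ^ (-d / 2))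
      = ((s : ℝ) + 2) ^ 2 * ((((s : ℝ) + 1) * ((s : ℝ) + 3) / 6) ^ (-d / 2)) := by
  rw [show (s : ℝ) + 1 + 2 = (s : ℝ) + 3 by ring]

lemma key_iff (d : ℝ) (hd : 0 < d) :
    Summable (fun s : ℕ =>
      ((s : ℝ) + 2) ^ 2 * ((((s : ℝ) + 1) * (((s : ℝ) + 1) + 2) / 6) ^ (-d / 2))) ↔ 3 < d := by
  have hs2 : ∀ s : ℕ, (0 : ℝ) < (s : ℝ) + 2 := fun s => by positivity
  -- bounds: (s+2)^2/12 ≤ (s+1)(s+3)/6 ≤ (s+2)^2/6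
  have hlow : ∀ s : ℕ, ((s : ℝ) + 2) ^ 2 / 12 ≤ ((s : ℝ) + 1) * ((s : ℝ) + 3) / 6 := by
    intro s; nlinarith [Nat.cast_nonneg (α := ℝ) s]
  have hup : ∀ s : ℕ, ((s : ℝ) + 1) * ((s : ℝ) + 3) / 6 ≤ ((s : ℝ) + 2) ^ 2 / 6 := by
    intro s; nlinarith [Nat.cast_nonneg (α := ℝ) s]
  have hx : ∀ s : ℕ, (0 : ℝ) < ((s : ℝ) + 1) * ((s : ℝ) + 3) / 6 := fun s => by positivity
  have hexp : (-d / 2 : ℝ) ≤ 0 := by linarith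
  -- rewrite pivot functions
  have hpow2 : ∀ s : ℕ, (((s : ℝ) + 2) ^ 2) ^ (-d / 2) = ((s : ℝ) + 2) ^ (-d) := by
    intro s
    rw [← Real.rpow_natCast ((s : ℝ) + 2) 2, ← Real.rpow_mul (le_of_lt (hs2 s)),
      show ((2 : ℕ) : ℝ) * (-d / 2) = -d by push_cast; ring]
  have hmul : ∀ s : ℕ, ((s : ℝ) + 2) ^ 2 * ((s : ℝ) + 2) ^ (-d) = ((s : ℝ) + 2) ^ (2 - d) := by
    intro s
    rw [← Real.rpow_natCast ((s : ℝ) + 2) 2, ← Real.rpow_add (hs2 s),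
      show ((2 : ℕ) : ℝ) + -d = 2 - d by push_cast; ring]
  constructor
  · intro h
    by_contra hle
    push_neg at hle
    have hbound : ∀ s : ℕ,
        (6 : ℝ) ^ (-d / 2) * ((s : ℝ) + 2) ^ (2 - d)
          ≤ ((s : ℝ) + 2) ^ 2 * ((((s : ℝ) + 1) * (((s : ℝ) + 1) + 2) / 6) ^ (-d / 2)) := by
      intro s
      rw [term_eq]
      have h1 : (((s : ℝ) + 2) ^ 2 / 6) ^ (-d / 2)
          ≤ (((s : ℝ) + 1) * ((s : ℝ) + 3) / 6) ^ (-d / 2) :=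
        Real.rpow_le_rpow_of_nonpos (hx s) (hup s) hexp
      have h2 : (((s : ℝ) + 2) ^ 2 / 6) ^ (-d / 2)
          = ((s : ℝ) + 2) ^ (-d) / (6 : ℝ) ^ (-d / 2) := by
        rw [Real.div_rpow (by positivity) (by norm_num), hpow2]
      have h6 : (0 : ℝ) < (6 : ℝ) ^ (-d / 2) := by positivity
      calc (6 : ℝ) ^ (-d / 2) * ((s : ℝ) + 2) ^ (2 - d)
          = ((s : ℝ) + 2) ^ 2 * ((6 : ℝ) ^ (-d / 2) * ((s : ℝ) + 2) ^ (-d)) := by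
            rw [← hmul s]; ring
        _ ≤ ((s : ℝ) + 2) ^ 2 * (((s : ℝ) + 1) * ((s : ℝ) + 3) / 6) ^ (-d / 2) := by
            apply mul_le_mul_of_nonneg_left _ (by positivity)
            calc (6 : ℝ) ^ (-d / 2) * ((s : ℝ) + 2) ^ (-d)
                ≤ ((s : ℝ) + 2) ^ (-d) / (6 : ℝ) ^ (-d / 2) := by
                  rw [div_eq_mul_inv, mul_comm]
                  apply mul_le_mul_of_nonneg_left _ (by positivity)
                  rw [← Real.rpow_neg (by norm_num)]
                  apply Real.rpow_le_rpow_of_exponent_le (by norm_num)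
                  linarith
              _ = (((s : ℝ) + 2) ^ 2 / 6) ^ (-d / 2) := h2.symm
              _ ≤ _ := h1
    have hsum : Summable (fun s : ℕ => (6 : ℝ) ^ (-d / 2) * ((s : ℝ) + 2) ^ (2 - d)) :=
      Summable.of_nonneg_of_le (fun s => by positivity) hbound h
    have : Summable (fun s : ℕ => ((s : ℝ) + 2) ^ (2 - d)) := by
      have h6 : (6 : ℝ) ^ (-d / 2) ≠ 0 := by positivity
      have := hsum.mul_left ((6 : ℝ) ^ (-d / 2))⁻¹
      simpa [← mul_assoc, inv_mul_cancel₀ h6] using this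
    rw [shifted_summable] at this
    linarith
  · intro h
    have hbound : ∀ s : ℕ,
        ((s : ℝ) + 2) ^ 2 * ((((s : ℝ) + 1) * (((s : ℝ) + 1) + 2) / 6) ^ (-d / 2))
          ≤ (12 : ℝ) ^ (d / 2) * ((s : ℝ) + 2) ^ (2 - d) := by
      intro s
      rw [term_eq]
      have h1 : (((s : ℝ) + 1) * ((s : ℝ) + 3) / 6) ^ (-d / 2)
          ≤ (((s : ℝ) + 2) ^ 2 / 12) ^ (-d / 2) :=
        Real.rpow_le_rpow_of_nonpos (by positivity) (hlow s) hexp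
      have h2 : (((s : ℝ) + 2) ^ 2 / 12) ^ (-d / 2)
          = ((s : ℝ) + 2) ^ (-d) * (12 : ℝ) ^ (d / 2) := by
        rw [Real.div_rpow (by positivity) (by norm_num), hpow2, div_eq_mul_inv,
          ← Real.rpow_neg (by norm_num),
          show -(-d / 2) = d / 2 by ring]
      calc ((s : ℝ) + 2) ^ 2 * (((s : ℝ) + 1) * ((s : ℝ) + 3) / 6) ^ (-d / 2)
          ≤ ((s : ℝ) + 2) ^ 2 * (((s : ℝ) + 2) ^ (-d) * (12 : ℝ) ^ (d / 2)) := by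
            rw [← h2]; exact mul_le_mul_of_nonneg_left h1 (by positivity)
        _ = (12 : ℝ) ^ (d / 2) * ((s : ℝ) + 2) ^ (2 - d) := by rw [← hmul s]; ring
    apply Summable.of_nonneg_of_le (fun s => by positivity) hbound
    apply Summable.mul_left
    rw [shifted_summable]
    linarith

lemma cheb_key (U : ℕ → Polynomial ℝ)
    (hU0 : U 0 = 1)
    (hU1 : U 1 = Polynomial.X)
    (hUrec : ∀ s : ℕ, U (s + 2) = Polynomial.X * U (s + 1) - U s) :
    ∀ s : ℕ, ((U s).eval 2 = (s : ℝ) + 1 ∧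
      (Polynomial.derivative (U s)).eval 2 = (s : ℝ) * ((s : ℝ) + 1) * ((s : ℝ) + 2) / 6) ∧
      ((U (s + 1)).eval 2 = ((s + 1 : ℕ) : ℝ) + 1 ∧
      (Polynomial.derivative (U (s + 1))).eval 2
        = ((s + 1 : ℕ) : ℝ) * (((s + 1 : ℕ) : ℝ) + 1) * (((s + 1 : ℕ) : ℝ) + 2) / 6) := by
  intro s
  induction s with
  | zero =>
    refine ⟨⟨?_, ?_⟩, ?_, ?_⟩ <;> simp [hU0, hU1] <;> norm_num
  | succ n ih =>
    refine ⟨ih.2, ?_, ?_⟩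
    · rw [show n + 1 + 1 = n + 2 from rfl, hUrec n]
      simp only [Polynomial.eval_sub, Polynomial.eval_mul, Polynomial.eval_X]
      rw [ih.2.1, ih.1.1]
      push_cast
      ring
    · rw [show n + 1 + 1 = n + 2 from rfl, hUrec n]
      simp only [Polynomial.derivative_sub, Polynomial.derivative_mul,
        Polynomial.derivative_X, Polynomial.eval_sub, Polynomial.eval_add,
        Polynomial.eval_mul, Polynomial.eval_X, Polynomial.eval_one, one_mul]
      rw [ih.2.1, ih.2.2, ih.1.2]
      push_cast
      ring

theorem spectral_dimension_O2_plus
    (U : ℕ → Polynomial ℝ)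
    (hU0 : U 0 = 1)
    (hU1 : U 1 = Polynomial.X)
    (hUrec : ∀ s : ℕ, U (s + 2) = Polynomial.X * U (s + 1) - U s) :
    (∀ s : ℕ, (U s).eval 2 = (s : ℝ) + 1) ∧
    (∀ s : ℕ, (Polynomial.derivative (U s)).eval 2 = (s : ℝ) * ((s : ℝ) + 1) * ((s : ℝ) + 2) / 6) ∧
    (∀ s : ℕ, -((Polynomial.derivative (U s)).eval 2) / (U s).eval 2
      = -((s : ℝ) * ((s : ℝ) + 2)) / 6) ∧
    sInf {d : ℝ | 0 < d ∧ Summable (fun s : ℕ =>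
      ((s : ℝ) + 2) ^ 2 * ((((s : ℝ) + 1) * (((s : ℝ) + 1) + 2) / 6) ^ (-d / 2)))} = 3 := by
  have key := cheb_key U hU0 hU1 hUrec
  have h1 : ∀ s : ℕ, (U s).eval 2 = (s : ℝ) + 1 := fun s => (key s).1.1
  have h2 : ∀ s : ℕ, (Polynomial.derivative (U s)).eval 2
      = (s : ℝ) * ((s : ℝ) + 1) * ((s : ℝ) + 2) / 6 := fun s => (key s).1.2
  refine ⟨h1, h2, ?_, ?_⟩
  · intro s
    rw [h1, h2]
    have hpos : (0 : ℝ) < (s : ℝ) + 1 := by positivity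
    field_simp
  · have hset : {d : ℝ | 0 < d ∧ Summable (fun s : ℕ =>
        ((s : ℝ) + 2) ^ 2 * ((((s : ℝ) + 1) * (((s : ℝ) + 1) + 2) / 6) ^ (-d / 2)))}
        = Set.Ioi 3 := by
      ext d
      simp only [Set.mem_setOf_eq, Set.mem_Ioi]
      constructor
      · rintro ⟨hd, hs⟩
        exact (key_iff d hd).mp hs
      · intro h
        exact ⟨by linarith, (key_iff d (by linarith)).mpr h⟩
    rw [hset, csInf_Ioi]
end
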